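/- arXiv:2402.08279 — 6 statements merged into one kernel-verified Lean document; each statement's English description precedes it below -/
import Mathlib

section
/- For a subspace lattice 𝔏 in a complex Banach space X, a rank-one operator e⊗η (given by x ↦ η(x)e) belongs to Alg(𝔏) if and only if there exists a subspace M ∈ 𝔏 such that e ∈ M and η annihilates M₋, where M₋ = ⋁{K ∈ 𝔏 : M ⊄ K}. -/
open ContinuousLinearMap

/-- The closed linear span (join) of a family of subspaces. -/
noncomputable def cJoin {X : Type*} [NormedAddCommGroup X] [NormedSpace ℂ X]
    (S : Set (Submodule ℂ X)) : Submodule ℂ X :=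
  (sSup S).topologicalClosure

/-- Join of two subspaces in the lattice of closed subspaces. -/
noncomputable def cJoin2 {X : Type*} [NormedAddCommGroup X] [NormedSpace ℂ X]
    (M N : Submodule ℂ X) : Submodule ℂ X :=
  (M ⊔ N).topologicalClosure

/-- A subspace lattice: a complete lattice of closed subspaces containing the trivial ones. -/
def IsSubspaceLattice {X : Type*} [NormedAddCommGroup X] [NormedSpace ℂ X]
    (L : Set (Submodule ℂ X)) : Prop :=
  (∀ M ∈ L, IsClosed (M : Set X)) ∧ ⊥ ∈ L ∧ ⊤ ∈ L ∧
    ∀ S ⊆ L, cJoin S ∈ L ∧ sInf S ∈ L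

/-- Alg(F): bounded operators leaving every member of F invariant. -/
def algOf {X : Type*} [NormedAddCommGroup X] [NormedSpace ℂ X]
    (L : Set (Submodule ℂ X)) : Set (X →L[ℂ] X) :=
  {A | ∀ M ∈ L, ∀ x ∈ M, A x ∈ M}

/-- Lat(T): closed subspaces invariant under every operator in T. -/
def latOf {X : Type*} [NormedAddCommGroup X] [NormedSpace ℂ X]
    (T : Set (X →L[ℂ] X)) : Set (Submodule ℂ X) :=
  {M | IsClosed (M : Set X) ∧ ∀ A ∈ T, ∀ x ∈ M, A x ∈ M}

/-- The rank-one operator e ⊗ η : x ↦ η(x) • e. -/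
noncomputable def rankOne {X : Type*} [NormedAddCommGroup X] [NormedSpace ℂ X]
    (e : X) (η : X →L[ℂ] ℂ) : X →L[ℂ] X :=
  η.smulRight e

/-- The rank-one operators in a set of operators. -/
noncomputable def Rk1 {X : Type*} [NormedAddCommGroup X] [NormedSpace ℂ X]
    (T : Set (X →L[ℂ] X)) : Set (X →L[ℂ] X) :=
  {A ∈ T | ∃ (e : X) (η : X →L[ℂ] ℂ), e ≠ 0 ∧ η ≠ 0 ∧ A = rankOne e η}

/-- M₋ = ⋁{K ∈ L : M ⊄ K}. -/
noncomputable def mMinus {X : Type*} [NormedAddCommGroup X] [NormedSpace ℂ X]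
    (L : Set (Submodule ℂ X)) (M : Submodule ℂ X) : Submodule ℂ X :=
  cJoin {K | K ∈ L ∧ ¬ M ≤ K}

/-- M₊ = ⋀{K ∈ L : K ⊄ M}. -/
noncomputable def mPlus {X : Type*} [NormedAddCommGroup X] [NormedSpace ℂ X]
    (L : Set (Submodule ℂ X)) (M : Submodule ℂ X) : Submodule ℂ X :=
  sInf {K | K ∈ L ∧ ¬ K ≤ M}

/-- N_* = ⋀{M₋ : M ∈ L, M ⊄ N}. -/
noncomputable def nStar {X : Type*} [NormedAddCommGroup X] [NormedSpace ℂ X]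
    (L : Set (Submodule ℂ X)) (N : Submodule ℂ X) : Submodule ℂ X :=
  sInf {P | ∃ M, M ∈ L ∧ ¬ M ≤ N ∧ P = mMinus L M}

/-- The cyclic subspace [Alg(L)x]: closed linear span of the orbit of x under Alg(L). -/
noncomputable def cyclicSubspace {X : Type*} [NormedAddCommGroup X] [NormedSpace ℂ X]
    (L : Set (Submodule ℂ X)) (x : X) : Submodule ℂ X :=
  (Submodule.span ℂ ((fun A : X →L[ℂ] X => A x) '' algOf L)).topologicalClosure

/-- The pinch points of a family of subspaces. -/
def pinOf {X : Type*} [NormedAddCommGroup X] [NormedSpace ℂ X]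
    (L : Set (Submodule ℂ X)) : Set (Submodule ℂ X) :=
  {P | P ∈ L ∧ ∀ M ∈ L, M ≤ P ∨ P ≤ M}

theorem IsSubspaceLattice.sInf_mem {X : Type*} [NormedAddCommGroup X] [NormedSpace ℂ X]
    {L : Set (Submodule ℂ X)} (hL : IsSubspaceLattice L) {S : Set (Submodule ℂ X)}
    (hS : S ⊆ L) : sInf S ∈ L :=
  (hL.2.2.2 S hS).2

section RankOne

variable {X : Type*} [NormedAddCommGroup X] [NormedSpace ℂ X]

theorem rankOne_apply (e : X) (η : X →L[ℂ] ℂ) (x : X) : rankOne e η x = η x • e := rfl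

theorem rankOne_mapsTo_iff (e : X) (η : X →L[ℂ] ℂ) (K : Submodule ℂ X) :
    (∀ x ∈ K, rankOne e η x ∈ K) ↔ e ∈ K ∨ K ≤ LinearMap.ker (η : X →ₗ[ℂ] ℂ) := by
  simp only [rankOne_apply]
  constructor
  · refine fun h => or_iff_not_imp_left.2 fun heK x hxK => ?_
    by_contra hηx
    exact heK ((K.smul_mem_iff hηx).1 (h x hxK))
  · rintro (heK | hKker) x hxK
    · exact K.smul_mem _ heK
    · rw [show η x = 0 from hKker hxK, zero_smul]
      exact K.zero_mem

theorem rankOne_mem_algOf_iff (L : Set (Submodule ℂ X)) (e : X) (η : X →L[ℂ] ℂ) :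
    rankOne e η ∈ algOf L ↔ ∀ K ∈ L, e ∈ K ∨ K ≤ LinearMap.ker (η : X →ₗ[ℂ] ℂ) :=
  forall₂_congr fun K _ => rankOne_mapsTo_iff e η K

end RankOne

section MMinus

variable {X : Type*} [NormedAddCommGroup X] [NormedSpace ℂ X]
  {L : Set (Submodule ℂ X)} {M : Submodule ℂ X}

theorem le_mMinus {K : Submodule ℂ X} (hK : K ∈ L) (hMK : ¬ M ≤ K) : K ≤ mMinus L M :=
  (le_sSup (show K ∈ {K | K ∈ L ∧ ¬ M ≤ K} from ⟨hK, hMK⟩)).trans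
    (Submodule.le_topologicalClosure _)

theorem mMinus_le_iff {N : Submodule ℂ X} (hN : IsClosed (N : Set X)) :
    mMinus L M ≤ N ↔ ∀ K ∈ L, ¬ M ≤ K → K ≤ N :=
  ⟨fun h _ hK hMK => (le_mMinus hK hMK).trans h, fun h =>
    Submodule.topologicalClosure_minimal _ (sSup_le fun K hK => h K hK.1 hK.2) hN⟩

end MMinus

theorem ringrose_lemma_general {X : Type*} [NormedAddCommGroup X] [NormedSpace ℂ X]
    (L : Set (Submodule ℂ X)) (hL : IsSubspaceLattice L)
    (e : X) (η : X →L[ℂ] ℂ) :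
    rankOne e η ∈ algOf L ↔ ∃ M ∈ L, e ∈ M ∧ ∀ x ∈ mMinus L M, η x = 0 := by
  have hker : IsClosed (LinearMap.ker (η : X →ₗ[ℂ] ℂ) : Set X) := η.isClosed_ker
  rw [rankOne_mem_algOf_iff]
  constructor
  · intro h
    set M := sInf {K | K ∈ L ∧ e ∈ K}
    refine ⟨M, hL.sInf_mem fun K hK => hK.1, Submodule.mem_sInf.2 fun K hK => hK.2, ?_⟩
    refine fun x hx => (mMinus_le_iff hker).2 (fun K hK hMK => ?_) hx
    exact (h K hK).resolve_left fun heK => hMK (sInf_le ⟨hK, heK⟩)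
  · rintro ⟨M, -, heM, hann⟩ K hK
    by_cases hMK : M ≤ K
    · exact Or.inl (hMK heM)
    · exact Or.inr fun x hx => hann x (le_mMinus hK hMK hx)

/-- Ringrose's Lemma: a rank-one operator e⊗η belongs to Alg(𝔏) iff there is M ∈ 𝔏
with e ∈ M and η annihilating M₋. -/
theorem ringrose_lemma {X : Type*} [NormedAddCommGroup X] [NormedSpace ℂ X] [CompleteSpace X]
    (L : Set (Submodule ℂ X)) (hL : IsSubspaceLattice L)
    (e : X) (η : X →L[ℂ] ℂ) (he : e ≠ 0) (hη : η ≠ 0) :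
    rankOne e η ∈ algOf L ↔ ∃ M ∈ L, e ∈ M ∧ ∀ x ∈ mMinus L M, η x = 0 :=
  ringrose_lemma_general L hL e η
end

section
/- Let 𝔏 be a subspace lattice in a Banach space X and let e ∈ X. A rank-one operator e⊗η belongs to Alg(𝔏) if and only if η annihilates [Alg(𝔏)e]₋, where [Alg(𝔏)e] is the cyclic subspace generated by e and N₋ = ⋁{K ∈ Lat(Alg(𝔏)) : N ⊄ K}. -/
open ContinuousLinearMap

/-!
A subspace `K` is invariant under `e ⊗ η` exactly when `e ∈ K` or `η` vanishes on `K`. For `K`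
in `Lat(Alg 𝔏)`, `e ∈ K` is the same as `[Alg(𝔏)e] ≤ K`, so `e ⊗ η ∈ Alg 𝔏` forces `η` to vanish
on every `K ∈ Lat(Alg 𝔏)` not containing `[Alg(𝔏)e]`, hence on their closed join. Conversely,
every `M ∈ 𝔏` lies in `Lat(Alg 𝔏)`, so either `e ∈ M` or `M ≤ [Alg(𝔏)e]₋ ≤ ker η`.
-/

section

variable {X : Type*} [NormedAddCommGroup X] [NormedSpace ℂ X]

theorem le_cJoin {S : Set (Submodule ℂ X)} {K : Submodule ℂ X} (hK : K ∈ S) : K ≤ cJoin S :=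
  (le_sSup hK).trans (sSup S).le_topologicalClosure

theorem cJoin_le {S : Set (Submodule ℂ X)} {P : Submodule ℂ X} (hP : IsClosed (P : Set X))
    (h : ∀ K ∈ S, K ≤ P) : cJoin S ≤ P :=
  Submodule.topologicalClosure_minimal _ (sSup_le h) hP

theorem mem_latOf_algOf {L : Set (Submodule ℂ X)} {M : Submodule ℂ X} (hM : M ∈ L)
    (hMc : IsClosed (M : Set X)) : M ∈ latOf (algOf L) :=
  ⟨hMc, fun _ hA => hA M hM⟩

theorem mem_cyclicSubspace_self (L : Set (Submodule ℂ X)) (e : X) : e ∈ cyclicSubspace L e :=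
  Submodule.le_topologicalClosure _ <|
    Submodule.subset_span ⟨ContinuousLinearMap.id ℂ X, fun _ _ _ hx => hx, rfl⟩

theorem cyclicSubspace_le_iff {L : Set (Submodule ℂ X)} {K : Submodule ℂ X}
    (hK : K ∈ latOf (algOf L)) (e : X) : cyclicSubspace L e ≤ K ↔ e ∈ K := by
  refine ⟨fun h => h (mem_cyclicSubspace_self L e), fun heK => ?_⟩
  refine Submodule.topologicalClosure_minimal _ ?_ hK.1
  rw [Submodule.span_le]
  rintro _ ⟨A, hA, rfl⟩
  exact hK.2 A hA e heK

end

theorem rankOne_mem_alg_iff_annihilates_cyclic_minus_general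
    {X : Type*} [NormedAddCommGroup X] [NormedSpace ℂ X]
    (L : Set (Submodule ℂ X)) (hL : IsSubspaceLattice L)
    (e : X) (η : X →L[ℂ] ℂ) :
    rankOne e η ∈ algOf L ↔
      ∀ x ∈ mMinus (latOf (algOf L)) (cyclicSubspace L e), η x = 0 := by
  set E := cyclicSubspace L e
  change _ ↔ mMinus (latOf (algOf L)) E ≤ LinearMap.ker (η : X →ₗ[ℂ] ℂ)
  constructor
  · intro halg
    refine cJoin_le (isClosed_ker η) ?_
    rintro K ⟨hK, hEK⟩
    refine ((rankOne_mapsTo_iff e η K).mp (hK.2 _ halg)).resolve_left fun heK => ?_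
    exact hEK ((cyclicSubspace_le_iff hK e).mpr heK)
  · intro hann M hM
    refine (rankOne_mapsTo_iff e η M).mpr ?_
    by_cases hEM : E ≤ M
    · exact Or.inl (hEM (mem_cyclicSubspace_self L e))
    · have hM_le : M ≤ mMinus (latOf (algOf L)) E :=
        le_cJoin ⟨mem_latOf_algOf hM (hL.1 M hM), hEM⟩
      exact Or.inr (hM_le.trans hann)

/-- A rank-one operator e⊗η belongs to Alg(𝔏) iff η annihilates [Alg(𝔏)e]₋,
where the minus operation is computed in Lat(Alg(𝔏)). -/
theorem rankOne_mem_alg_iff_annihilates_cyclic_minus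
    {X : Type*} [NormedAddCommGroup X] [NormedSpace ℂ X] [CompleteSpace X]
    (L : Set (Submodule ℂ X)) (hL : IsSubspaceLattice L)
    (e : X) (η : X →L[ℂ] ℂ) (he : e ≠ 0) (hη : η ≠ 0) :
    rankOne e η ∈ algOf L ↔
      ∀ x ∈ mMinus (latOf (algOf L)) (cyclicSubspace L e), η x = 0 :=
  rankOne_mem_alg_iff_annihilates_cyclic_minus_general L hL e η
end

section
/- If a subspace lattice 𝔏 in a Banach space X satisfies N_* = N for all N ∈ 𝔏 (where N_* = ⋀{M₋ : M ∈ 𝔏, M ⊄ N}), then 𝔏 is reflexive; moreover, 𝔏 equals the lattice of closed subspaces invariant under all rank-one operators in Alg(𝔏). -/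
open ContinuousLinearMap

/-- Hahn–Banach separation: a functional vanishing on a closed subspace, equal to 1 at x. -/
lemma sep_functional {X : Type*} [NormedAddCommGroup X] [NormedSpace ℂ X]
    (W : Submodule ℂ X) (hW : IsClosed (W : Set X)) {x : X} (hx : x ∉ W) :
    ∃ η : X →L[ℂ] ℂ, (∀ y ∈ W, η y = 0) ∧ η x = 1 := by
  obtain ⟨f, u, hfa, hfx⟩ := RCLike.geometric_hahn_banach_closed_point (𝕜 := ℂ)
    ((W.restrictScalars ℝ).convex) hW hx
  have hu : 0 < u := by simpa using hfa 0 W.zero_mem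
  have hf0 : ∀ y ∈ W, f y = 0 := by
    intro y hy
    by_contra hne
    have h1 : (((u : ℂ) + 1) / f y) • y ∈ W := W.smul_mem _ hy
    have h2 := hfa _ h1
    rw [map_smul, smul_eq_mul, div_mul_cancel₀ _ hne] at h2
    simp only [Complex.add_re, Complex.ofReal_re, Complex.one_re, RCLike.re_to_complex] at h2
    linarith
  have hfx0 : f x ≠ 0 := by
    intro h0
    rw [h0] at hfx
    simp at hfx
    linarith
  refine ⟨(f x)⁻¹ • f, fun y hy => ?_, ?_⟩
  · simp [hf0 y hy]
  · simp [inv_mul_cancel₀ hfx0]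

/-- The smallest candidate subspace for a functional η: ⋀{K ∈ L : η ∤ K}. -/
noncomputable def Kset {X : Type*} [NormedAddCommGroup X] [NormedSpace ℂ X]
    (L : Set (Submodule ℂ X)) (η : X →L[ℂ] ℂ) : Submodule ℂ X :=
  sInf {K | K ∈ L ∧ ∃ y ∈ K, η y ≠ 0}


/-- If N_* = N for all N ∈ 𝔏 then 𝔏 is reflexive; moreover 𝔏 = Lat(Rk1(Alg(𝔏))). -/
theorem stronglyReflexive_implies_reflexive
    {X : Type*} [NormedAddCommGroup X] [NormedSpace ℂ X] [CompleteSpace X]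
    (L : Set (Submodule ℂ X)) (hL : IsSubspaceLattice L)
    (h : ∀ N ∈ L, nStar L N = N) :
    latOf (algOf L) = L ∧ latOf (Rk1 (algOf L)) = L := by
  classical
  obtain ⟨hclosed, -, -, hSJ⟩ := hL
  have hJmem : ∀ S ⊆ L, cJoin S ∈ L := fun S hS => (hSJ S hS).1
  have hImem : ∀ S ⊆ L, sInf S ∈ L := fun S hS => (hSJ S hS).2
  have hle_cJoin : ∀ (S : Set (Submodule ℂ X)), ∀ P ∈ S, P ≤ cJoin S :=
    fun S P hP => le_trans (le_sSup hP) (Submodule.le_topologicalClosure _)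
  have hcJoin_le : ∀ (S : Set (Submodule ℂ X)) (N : Submodule ℂ X),
      IsClosed (N : Set X) → (∀ P ∈ S, P ≤ N) → cJoin S ≤ N :=
    fun S N hN hPN => Submodule.topologicalClosure_minimal _ (sSup_le hPN) hN
  have hMminus : ∀ M, mMinus L M ∈ L := fun M => hJmem _ (fun K hK => hK.1)
  have hKmem : ∀ η : X →L[ℂ] ℂ, Kset L η ∈ L := fun η => hImem _ (fun K hK => hK.1)
  -- rank-one operators built from Kset are in the algebra
  have hrk : ∀ (η : X →L[ℂ] ℂ) (e : X), e ∈ Kset L η → rankOne e η ∈ algOf L := by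
    intro η e he M hM x hx
    show η x • e ∈ M
    by_cases hη : ∃ y ∈ M, η y ≠ 0
    · have : Kset L η ≤ M := sInf_le ⟨hM, hη⟩
      exact M.smul_mem _ (this he)
    · push_neg at hη
      rw [hη x hx, zero_smul]
      exact M.zero_mem
  -- the hard inclusion
  have hard : ∀ N ∈ latOf (Rk1 (algOf L)), N ∈ L := by
    rintro N ⟨hNc, hNinv⟩
    set S : Set (Submodule ℂ X) :=
      {P | ∃ η : X →L[ℂ] ℂ, (∃ x ∈ N, η x ≠ 0) ∧ P = Kset L η} with hSdef
    have hSL : S ⊆ L := by rintro P ⟨η, -, rfl⟩; exact hKmem η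
    have hWL : cJoin S ∈ L := hJmem S hSL
    -- each Kset L η with η ∤ N lies inside N, by rank-one invariance
    have hKN : ∀ η : X →L[ℂ] ℂ, (∃ x ∈ N, η x ≠ 0) → Kset L η ≤ N := by
      rintro η ⟨x, hxN, hηx⟩ e he
      by_cases he0 : e = 0
      · rw [he0]; exact N.zero_mem
      · have hη0 : η ≠ 0 := by
          intro h0; rw [h0] at hηx; exact hηx rfl
        have hA : rankOne e η ∈ Rk1 (algOf L) := ⟨hrk η e he, e, η, he0, hη0, rfl⟩
        have h1 : η x • e ∈ N := hNinv _ hA x hxN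
        have h2 := N.smul_mem (η x)⁻¹ h1
        rwa [smul_smul, inv_mul_cancel₀ hηx, one_smul] at h2
    have hWN : cJoin S ≤ N := by
      refine hcJoin_le S N hNc ?_
      rintro P ⟨η, hη, rfl⟩
      exact hKN η hη
    have hNW : N ≤ cJoin S := by
      by_contra hnot
      obtain ⟨x, hxN, hxW⟩ := SetLike.not_le_iff_exists.mp hnot
      have hxW' : x ∉ nStar L (cJoin S) := by rw [h _ hWL]; exact hxW
      rw [nStar, Submodule.mem_sInf] at hxW'
      push_neg at hxW'
      obtain ⟨P, ⟨M, hML, hMW, rfl⟩, hxP⟩ := hxW'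
      obtain ⟨η, hη0, hηx⟩ := sep_functional (mMinus L M) (hclosed _ (hMminus M)) hxP
      have hMK : M ≤ Kset L η := by
        refine le_sInf ?_
        rintro K ⟨hKL, y, hyK, hηy⟩
        by_contra hMK'
        have hKM : K ≤ mMinus L M := hle_cJoin {K' | K' ∈ L ∧ ¬ M ≤ K'} K ⟨hKL, hMK'⟩
        exact hηy (hη0 y (hKM hyK))
      have hKW : Kset L η ≤ cJoin S :=
        hle_cJoin S _ ⟨η, ⟨x, hxN, by rw [hηx]; exact one_ne_zero⟩, rfl⟩
      exact hMW (hMK.trans hKW)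
    have : N = cJoin S := le_antisymm hNW hWN
    rw [this]; exact hWL
  have e1 : L ⊆ latOf (algOf L) := fun M hM => ⟨hclosed M hM, fun A hA => hA M hM⟩
  have e2 : latOf (algOf L) ⊆ latOf (Rk1 (algOf L)) :=
    fun M hM => ⟨hM.1, fun A hA => hM.2 A hA.1⟩
  exact ⟨Set.Subset.antisymm (fun M hM => hard M (e2 hM)) e1,
    Set.Subset.antisymm (fun M hM => hard M hM) (fun M hM => e2 (e1 hM))⟩
end

section
/- Every nest (totally ordered complete subspace lattice containing {0} and X) in a complex Banach space X is reflexive: Lat(Alg(𝔑)) = 𝔑. -/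
open ContinuousLinearMap

/-- Hahn-Banach: separate a point from a closed submodule with a ℂ-functional. -/
lemma exists_functional_vanishing {X : Type*} [NormedAddCommGroup X] [NormedSpace ℂ X]
    (M : Submodule ℂ X) (hM : IsClosed (M : Set X)) {y : X} (hy : y ∉ M) :
    ∃ φ : X →L[ℂ] ℂ, (∀ x ∈ M, φ x = 0) ∧ φ y = 1 := by
  obtain ⟨f, u, hfa, hfy⟩ := RCLike.geometric_hahn_banach_closed_point (𝕜 := ℂ)
    (M.restrictScalars ℝ).convex hM hy
  have h0 : (0:ℝ) < u := by simpa using hfa 0 M.zero_mem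
  have hvan : ∀ x ∈ M, f x = 0 := by
    intro x hx
    by_contra h
    have key : ∀ t : ℝ, t * Complex.normSq (f x) < u := by
      intro t
      have hmem : ((t : ℂ) * (starRingEnd ℂ) (f x)) • x ∈ M := M.smul_mem _ hx
      have := hfa _ hmem
      rw [map_smul] at this
      simp only [smul_eq_mul] at this
      have : RCLike.re ((t : ℂ) * (starRingEnd ℂ) (f x) * f x) < u := this
      rw [mul_assoc, mul_comm ((starRingEnd ℂ) (f x)) (f x), Complex.mul_conj] at this
      simpa [Complex.ofReal_pow, ← Complex.ofReal_mul] using this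
    have hpos : (0:ℝ) < Complex.normSq (f x) := Complex.normSq_pos.2 h
    have := key ((u+1) / Complex.normSq (f x))
    rw [div_mul_cancel₀ _ (ne_of_gt hpos)] at this
    linarith
  have hfy0 : f y ≠ 0 := by
    intro h
    rw [h] at hfy
    simp at hfy
    linarith
  refine ⟨(f y)⁻¹ • f, fun x hx => ?_, ?_⟩
  · simp [hvan x hx]
  · simp [inv_mul_cancel₀ hfy0]

/-- Every nest in a complex Banach space is reflexive. -/
theorem nest_reflexive
    {X : Type*} [NormedAddCommGroup X] [NormedSpace ℂ X] [CompleteSpace X]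
    (L : Set (Submodule ℂ X)) (hL : IsSubspaceLattice L)
    (hnest : ∀ M ∈ L, ∀ N ∈ L, M ≤ N ∨ N ≤ M) :
    latOf (algOf L) = L := by
  obtain ⟨hclosed, hbot, htop, hops⟩ := hL
  apply Set.Subset.antisymm
  · rintro N ⟨hNcl, hNinv⟩
    -- Step 1: N is comparable to every element of L
    have hcomp : ∀ K ∈ L, K ≤ N ∨ N ≤ K := by
      intro K hK
      by_contra hcon
      push_neg at hcon
      obtain ⟨hKN, hNK⟩ := hcon
      obtain ⟨z, hzK, hzN⟩ := SetLike.not_le_iff_exists.1 hKN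
      obtain ⟨y, hyN, hyK⟩ := SetLike.not_le_iff_exists.1 hNK
      obtain ⟨φ, hφvan, hφy⟩ := exists_functional_vanishing K (hclosed K hK) hyK
      have hA : rankOne z φ ∈ algOf L := by
        intro K' hK' x hx
        rcases hnest K' hK' K hK with h | h
        · have hx0 : φ x = 0 := hφvan x (h hx)
          simp [rankOne, hx0]
        · exact K'.smul_mem _ (h hzK)
      have := hNinv _ hA y hyN
      rw [rankOne, ContinuousLinearMap.smulRight_apply, hφy, one_smul] at this
      exact hzN this
    -- Step 2: squeeze N between two adjacent elements of L
    set N₁ : Submodule ℂ X := cJoin {K | K ∈ L ∧ K ≤ N} with hN₁def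
    set N₂ : Submodule ℂ X := sInf {K | K ∈ L ∧ ¬ K ≤ N} with hN₂def
    have hN₁L : N₁ ∈ L := (hops _ (fun K hK => hK.1)).1
    have hN₂L : N₂ ∈ L := (hops _ (fun K hK => hK.1)).2
    have hN₁N : N₁ ≤ N := by
      show (sSup {K | K ∈ L ∧ K ≤ N}).topologicalClosure ≤ N
      exact Submodule.topologicalClosure_minimal _ (sSup_le fun K hK => hK.2) hNcl
    have hNN₂ : N ≤ N₂ := le_sInf fun K hK => (hcomp K hK.1).resolve_left hK.2
    by_cases h1 : N = N₁
    · rw [h1]; exact hN₁L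
    by_cases h2 : N = N₂
    · rw [h2]; exact hN₂L
    exfalso
    obtain ⟨y, hyN, hyN₁⟩ := SetLike.not_le_iff_exists.1
      (fun h : N ≤ N₁ => h1 (le_antisymm h hN₁N))
    obtain ⟨z, hzN₂, hzN⟩ := SetLike.not_le_iff_exists.1
      (fun h : N₂ ≤ N => h2 (le_antisymm hNN₂ h))
    obtain ⟨φ, hφvan, hφy⟩ := exists_functional_vanishing N₁ (hclosed _ hN₁L) hyN₁
    have hA : rankOne z φ ∈ algOf L := by
      intro K' hK' x hx
      by_cases hc : K' ≤ N
      · have hK'N₁ : K' ≤ N₁ :=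
          le_trans (le_sSup (show K' ∈ {K | K ∈ L ∧ K ≤ N} from ⟨hK', hc⟩))
            (Submodule.le_topologicalClosure _)
        have hx0 : φ x = 0 := hφvan x (hK'N₁ hx)
        simp [rankOne, hx0]
      · have hN₂K' : N₂ ≤ K' := sInf_le ⟨hK', hc⟩
        exact K'.smul_mem _ (hN₂K' hzN₂)
    have := hNinv _ hA y hyN
    rw [rankOne, ContinuousLinearMap.smulRight_apply, hφy, one_smul] at this
    exact hzN this
  · intro M hM
    exact ⟨hclosed M hM, fun A hA x hx => hA M hM x hx⟩
end

section
/- In an atomic Boolean subspace lattice 𝔅, the complement of a nontrivial M ∈ 𝔅 equals the join of all atoms K with K ∧ M = {0}. -/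
open ContinuousLinearMap

/-- An atom of a subspace lattice: a nontrivial minimal element. -/
def IsLatAtom {X : Type*} [NormedAddCommGroup X] [NormedSpace ℂ X]
    (L : Set (Submodule ℂ X)) (K : Submodule ℂ X) : Prop :=
  K ∈ L ∧ K ≠ ⊥ ∧ K ≠ ⊤ ∧ ∀ B ∈ L, B ≤ K → B = ⊥ ∨ B = K

/-- A Boolean subspace lattice with complementation map `c`: distributive and
(uniquely) complemented. -/
def IsBooleanSubspaceLattice {X : Type*} [NormedAddCommGroup X] [NormedSpace ℂ X]
    (L : Set (Submodule ℂ X)) (c : Submodule ℂ X → Submodule ℂ X) : Prop :=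
  IsSubspaceLattice L ∧
  (∀ M ∈ L, ∀ N ∈ L, ∀ K ∈ L, M ⊓ cJoin2 N K = cJoin2 (M ⊓ N) (M ⊓ K)) ∧
  (∀ M ∈ L, ∀ N ∈ L, ∀ K ∈ L, cJoin2 M (N ⊓ K) = cJoin2 M N ⊓ cJoin2 M K) ∧
  (∀ M ∈ L, c M ∈ L ∧ M ⊓ c M = ⊥ ∧ cJoin2 M (c M) = ⊤) ∧
  (∀ M ∈ L, ∀ N ∈ L, M ⊓ N = ⊥ → cJoin2 M N = ⊤ → N = c M)

/-- An atomic Boolean subspace lattice: every element is the join of the atoms below it. -/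
def IsAtomicBooleanSubspaceLattice {X : Type*} [NormedAddCommGroup X] [NormedSpace ℂ X]
    (L : Set (Submodule ℂ X)) (c : Submodule ℂ X → Submodule ℂ X) : Prop :=
  IsBooleanSubspaceLattice L c ∧
  ∀ M ∈ L, M = cJoin {K | IsLatAtom L K ∧ K ≤ M}

theorem cJoin2_bot_left {X : Type*} [NormedAddCommGroup X] [NormedSpace ℂ X]
    {N : Submodule ℂ X} (hN : IsClosed (N : Set X)) : cJoin2 ⊥ N = N := by
  rw [cJoin2, bot_sup_eq, hN.submodule_topologicalClosure_eq]

namespace IsBooleanSubspaceLattice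

variable {X : Type*} [NormedAddCommGroup X] [NormedSpace ℂ X]
  {L : Set (Submodule ℂ X)} {c : Submodule ℂ X → Submodule ℂ X}

theorem compl_mem (hB : IsBooleanSubspaceLattice L c) {M : Submodule ℂ X} (hM : M ∈ L) :
    c M ∈ L :=
  (hB.2.2.2.1 M hM).1

theorem inf_compl_eq_bot (hB : IsBooleanSubspaceLattice L c) {M : Submodule ℂ X} (hM : M ∈ L) :
    M ⊓ c M = ⊥ :=
  (hB.2.2.2.1 M hM).2.1

theorem cJoin2_compl_eq_top (hB : IsBooleanSubspaceLattice L c) {M : Submodule ℂ X}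
    (hM : M ∈ L) : cJoin2 M (c M) = ⊤ :=
  (hB.2.2.2.1 M hM).2.2

theorem le_compl_of_inf_eq_bot (hB : IsBooleanSubspaceLattice L c) {M K : Submodule ℂ X}
    (hM : M ∈ L) (hK : K ∈ L) (hKM : K ⊓ M = ⊥) : K ≤ c M := by
  have hKc_closed : IsClosed ((K ⊓ c M : Submodule ℂ X) : Set X) :=
    (hB.1.1 K hK).inter (hB.1.1 (c M) (hB.compl_mem hM))
  -- distributivity: K = K ⊓ (M ∨ c M) = (K ⊓ M) ∨ (K ⊓ c M) = K ⊓ c M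
  have hK_eq : K = K ⊓ c M := by
    have hdist := hB.2.1 K hK M hM (c M) (hB.compl_mem hM)
    rwa [hB.cJoin2_compl_eq_top hM, inf_top_eq, hKM, cJoin2_bot_left hKc_closed] at hdist
  rw [hK_eq]
  exact inf_le_right

theorem inf_eq_bot_of_le_compl (hB : IsBooleanSubspaceLattice L c) {M K : Submodule ℂ X}
    (hM : M ∈ L) (hK : K ≤ c M) : K ⊓ M = ⊥ :=
  le_bot_iff.mp <| calc
    K ⊓ M ≤ c M ⊓ M := inf_le_inf_right M hK
    _ = ⊥ := by rw [inf_comm, hB.inf_compl_eq_bot hM]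

theorem inf_eq_bot_iff_le_compl (hB : IsBooleanSubspaceLattice L c) {M K : Submodule ℂ X}
    (hM : M ∈ L) (hK : K ∈ L) : K ⊓ M = ⊥ ↔ K ≤ c M :=
  ⟨hB.le_compl_of_inf_eq_bot hM hK, hB.inf_eq_bot_of_le_compl hM⟩

end IsBooleanSubspaceLattice

theorem complement_eq_join_disjoint_atoms_general
    {X : Type*} [NormedAddCommGroup X] [NormedSpace ℂ X]
    (L : Set (Submodule ℂ X)) (c : Submodule ℂ X → Submodule ℂ X)
    (hB : IsAtomicBooleanSubspaceLattice L c)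
    (M : Submodule ℂ X) (hM : M ∈ L) :
    c M = cJoin {K | IsLatAtom L K ∧ K ⊓ M = ⊥} := by
  obtain ⟨hBool, hAtomic⟩ := hB
  have hAtoms : {K | IsLatAtom L K ∧ K ≤ c M} = {K | IsLatAtom L K ∧ K ⊓ M = ⊥} := by
    ext K
    exact and_congr_right fun hK => (hBool.inf_eq_bot_iff_le_compl hM hK.1).symm
  rw [hAtomic (c M) (hBool.compl_mem hM), hAtoms]

/-- In an atomic Boolean subspace lattice, the complement of a nontrivial M is the join of
all atoms K with K ∧ M = {0}. -/
theorem complement_eq_join_disjoint_atoms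
    {X : Type*} [NormedAddCommGroup X] [NormedSpace ℂ X] [CompleteSpace X]
    (L : Set (Submodule ℂ X)) (c : Submodule ℂ X → Submodule ℂ X)
    (hB : IsAtomicBooleanSubspaceLattice L c)
    (M : Submodule ℂ X) (hM : M ∈ L) (h0 : M ≠ ⊥) (h1 : M ≠ ⊤) :
    c M = cJoin {K | IsLatAtom L K ∧ K ⊓ M = ⊥} :=
  complement_eq_join_disjoint_atoms_general L c hB M hM
end

section
/- The ordinal sum 𝔏₁⊕𝔏₂ of two subspace lattices 𝔏₁ ⊆ C(X₁), 𝔏₂ ⊆ C(X₂), realized in X₁⊕X₂, is reflexive if and only if both 𝔏₁ and 𝔏₂ are reflexive. -/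
open ContinuousLinearMap

/-- The ordinal sum of two subspace lattices, realized in the direct sum X₁ ⊕ X₂. -/
def ordinalSum {X₁ X₂ : Type*} [NormedAddCommGroup X₁] [NormedSpace ℂ X₁]
    [NormedAddCommGroup X₂] [NormedSpace ℂ X₂]
    (L₁ : Set (Submodule ℂ X₁)) (L₂ : Set (Submodule ℂ X₂)) :
    Set (Submodule ℂ (X₁ × X₂)) :=
  {M | ∃ M₁ ∈ L₁, M = M₁.prod ⊥} ∪ {M | ∃ M₂ ∈ L₂, M = (⊤ : Submodule ℂ X₁).prod M₂}

/-!
Every operator leaving the ordinal sum invariant is upper triangular, `(x, y) ↦ (A x + C y, B y)`,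
with `A ∈ Alg 𝔏₁`, `B ∈ Alg 𝔏₂` and an arbitrary corner `C`; conversely all such operators lie in
`Alg (𝔏₁ ⊕ 𝔏₂)`. Invariance under the diagonal idempotents splits an invariant subspace as
`M₁ ⊕ M₂`, and the corners `y ↦ f y • x` force `M₁ = X₁` as soon as `M₂ ≠ 0`. Hence
`Lat Alg (𝔏₁ ⊕ 𝔏₂) = Lat Alg 𝔏₁ ⊕ Lat Alg 𝔏₂`, and since `X₁ ∈ 𝔏₁` and `0 ∈ 𝔏₂`, an ordinal
sum determines its summands.
-/

section AlgLat

variable {X : Type*} [NormedAddCommGroup X] [NormedSpace ℂ X]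

lemma zero_mem_algOf (L : Set (Submodule ℂ X)) : (0 : X →L[ℂ] X) ∈ algOf L :=
  fun _ _ _ _ => zero_mem _

lemma id_mem_algOf (L : Set (Submodule ℂ X)) : ContinuousLinearMap.id ℂ X ∈ algOf L :=
  fun _ _ _ hx => hx

lemma top_mem_latOf (T : Set (X →L[ℂ] X)) : (⊤ : Submodule ℂ X) ∈ latOf T :=
  ⟨isClosed_univ, fun _ _ _ _ => trivial⟩

lemma bot_mem_latOf (T : Set (X →L[ℂ] X)) : (⊥ : Submodule ℂ X) ∈ latOf T := by
  refine ⟨by simpa only [Submodule.bot_coe] using isClosed_singleton, fun A _ x hx => ?_⟩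
  rw [(Submodule.mem_bot ℂ).1 hx, map_zero]
  exact zero_mem _

end AlgLat

section OrdinalSum

variable {X₁ X₂ : Type*} [NormedAddCommGroup X₁] [NormedSpace ℂ X₁]
  [NormedAddCommGroup X₂] [NormedSpace ℂ X₂]
  {L₁ : Set (Submodule ℂ X₁)} {L₂ : Set (Submodule ℂ X₂)}

lemma prod_bot_mem_ordinalSum_iff (h : ⊤ ∈ L₁) {M₁ : Submodule ℂ X₁} :
    M₁.prod ⊥ ∈ ordinalSum L₁ L₂ ↔ M₁ ∈ L₁ := by
  refine ⟨?_, fun hM₁ => Or.inl ⟨M₁, hM₁, rfl⟩⟩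
  rintro (⟨N, hN, hM⟩ | ⟨N, -, hM⟩) <;>
    rw [← Submodule.prod_comap_inl M₁ (⊥ : Submodule ℂ X₂), hM, Submodule.prod_comap_inl]
  exacts [hN, h]

lemma top_prod_mem_ordinalSum_iff (h : ⊥ ∈ L₂) {M₂ : Submodule ℂ X₂} :
    (⊤ : Submodule ℂ X₁).prod M₂ ∈ ordinalSum L₁ L₂ ↔ M₂ ∈ L₂ := by
  refine ⟨?_, fun hM₂ => Or.inr ⟨M₂, hM₂, rfl⟩⟩
  rintro (⟨N, -, hM⟩ | ⟨N, hN, hM⟩) <;>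
    rw [← Submodule.prod_comap_inr (⊤ : Submodule ℂ X₁) M₂, hM, Submodule.prod_comap_inr]
  exacts [h, hN]

lemma ordinalSum_inj {L₁' : Set (Submodule ℂ X₁)} {L₂' : Set (Submodule ℂ X₂)}
    (h₁ : ⊤ ∈ L₁) (h₁' : ⊤ ∈ L₁') (h₂ : ⊥ ∈ L₂) (h₂' : ⊥ ∈ L₂') :
    ordinalSum L₁ L₂ = ordinalSum L₁' L₂' ↔ L₁ = L₁' ∧ L₂ = L₂' := by
  refine ⟨fun h => ⟨?_, ?_⟩, fun ⟨h₁, h₂⟩ => h₁ ▸ h₂ ▸ rfl⟩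
  · ext M₁
    rw [← prod_bot_mem_ordinalSum_iff (L₂ := L₂) h₁, h, prod_bot_mem_ordinalSum_iff h₁']
  · ext M₂
    rw [← top_prod_mem_ordinalSum_iff (L₁ := L₁) h₂, h, top_prod_mem_ordinalSum_iff h₂']

variable (X₁ X₂) in
noncomputable def upperTriangular (A : X₁ →L[ℂ] X₁) (C : X₂ →L[ℂ] X₁) (B : X₂ →L[ℂ] X₂) :
    X₁ × X₂ →L[ℂ] X₁ × X₂ :=
  (A ∘L fst ℂ X₁ X₂ + C ∘L snd ℂ X₁ X₂).prod (B ∘L snd ℂ X₁ X₂)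

@[simp]
lemma upperTriangular_apply (A : X₁ →L[ℂ] X₁) (C : X₂ →L[ℂ] X₁) (B : X₂ →L[ℂ] X₂)
    (p : X₁ × X₂) : upperTriangular X₁ X₂ A C B p = (A p.1 + C p.2, B p.2) :=
  rfl

lemma upperTriangular_mem_algOf_ordinalSum {A : X₁ →L[ℂ] X₁} (hA : A ∈ algOf L₁)
    (C : X₂ →L[ℂ] X₁) {B : X₂ →L[ℂ] X₂} (hB : B ∈ algOf L₂) :
    upperTriangular X₁ X₂ A C B ∈ algOf (ordinalSum L₁ L₂) := by
  rintro _ (⟨M₁, hM₁, rfl⟩ | ⟨M₂, hM₂, rfl⟩) ⟨x, y⟩ ⟨hx, hy⟩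
  · obtain rfl : y = 0 := hy
    simpa using hA M₁ hM₁ x hx
  · exact ⟨trivial, hB M₂ hM₂ y hy⟩

lemma mem_algOf_ordinalSum_iff (h : ⊤ ∈ L₁) {T : X₁ × X₂ →L[ℂ] X₁ × X₂} :
    T ∈ algOf (ordinalSum L₁ L₂) ↔
      ∃ A ∈ algOf L₁, ∃ C, ∃ B ∈ algOf L₂, T = upperTriangular X₁ X₂ A C B := by
  refine ⟨fun hT => ?_, fun ⟨A, hA, C, B, hB, hT⟩ =>
    hT ▸ upperTriangular_mem_algOf_ordinalSum hA C hB⟩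
  have hfirst (K : Submodule ℂ X₁) (hK : K ∈ L₁) (x : X₁) (hx : x ∈ K) :
      T (x, 0) ∈ K.prod ⊥ :=
    hT _ (Or.inl ⟨K, hK, rfl⟩) _ ⟨hx, zero_mem _⟩
  have hsecond (K : Submodule ℂ X₂) (hK : K ∈ L₂) (y : X₂) (hy : y ∈ K) :
      T (0, y) ∈ (⊤ : Submodule ℂ X₁).prod K :=
    hT _ (Or.inr ⟨K, hK, rfl⟩) _ ⟨trivial, hy⟩
  refine ⟨fst ℂ X₁ X₂ ∘L T ∘L inl ℂ X₁ X₂, fun K hK x hx => (hfirst K hK x hx).1,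
    fst ℂ X₁ X₂ ∘L T ∘L inr ℂ X₁ X₂, snd ℂ X₁ X₂ ∘L T ∘L inr ℂ X₁ X₂,
    fun K hK y hy => (hsecond K hK y hy).2, ?_⟩
  have hlower (x : X₁) : (T (x, 0)).2 = 0 := (Submodule.mem_bot ℂ).1 (hfirst ⊤ h x trivial).2
  refine prod_ext (ext fun x => Prod.ext ?_ ?_) (ext fun y => Prod.ext ?_ ?_) <;>
    simp [hlower, Prod.mk_zero_zero]

variable {N : Submodule ℂ (X₁ × X₂)}

lemma comap_inl_mem_latOf_algOf (hN : N ∈ latOf (algOf (ordinalSum L₁ L₂))) :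
    N.comap (LinearMap.inl ℂ X₁ X₂) ∈ latOf (algOf L₁) := by
  refine ⟨hN.1.preimage (inl ℂ X₁ X₂).continuous, fun A hA x hx => ?_⟩
  simpa using hN.2 _ (upperTriangular_mem_algOf_ordinalSum hA 0 (zero_mem_algOf _)) _ hx

lemma comap_inr_mem_latOf_algOf (hN : N ∈ latOf (algOf (ordinalSum L₁ L₂))) :
    N.comap (LinearMap.inr ℂ X₁ X₂) ∈ latOf (algOf L₂) := by
  refine ⟨hN.1.preimage (inr ℂ X₁ X₂).continuous, fun B hB y hy => ?_⟩
  simpa using hN.2 _ (upperTriangular_mem_algOf_ordinalSum (zero_mem_algOf _) 0 hB) _ hy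

lemma eq_prod_comap_of_mem_latOf_algOf_ordinalSum
    (hN : N ∈ latOf (algOf (ordinalSum L₁ L₂))) :
    N = (N.comap (LinearMap.inl ℂ X₁ X₂)).prod (N.comap (LinearMap.inr ℂ X₁ X₂)) := by
  have hproj₁ := upperTriangular_mem_algOf_ordinalSum (id_mem_algOf L₁) 0 (zero_mem_algOf L₂)
  have hproj₂ := upperTriangular_mem_algOf_ordinalSum (zero_mem_algOf L₁) 0 (id_mem_algOf L₂)
  ext ⟨x, y⟩
  refine ⟨fun hxy => ⟨?_, ?_⟩, fun ⟨hx, hy⟩ => by simpa using N.add_mem hx hy⟩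
  · simpa using hN.2 _ hproj₁ _ hxy
  · simpa using hN.2 _ hproj₂ _ hxy

lemma comap_inl_eq_top_of_comap_inr_ne_bot (hN : N ∈ latOf (algOf (ordinalSum L₁ L₂)))
    (hne : N.comap (LinearMap.inr ℂ X₁ X₂) ≠ ⊥) : N.comap (LinearMap.inl ℂ X₁ X₂) = ⊤ := by
  obtain ⟨y, hy, hy0⟩ := Submodule.exists_mem_ne_zero_of_ne_bot hne
  obtain ⟨f, hf⟩ := SeparatingDual.exists_eq_one (R := ℂ) hy0
  refine Submodule.eq_top_iff'.2 fun x => ?_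
  -- the corner `y' ↦ f y' • x` carries `(0, y) ∈ N` to `(x, 0)`
  simpa [hf] using hN.2 _ (upperTriangular_mem_algOf_ordinalSum (zero_mem_algOf _)
    (f.smulRight x) (zero_mem_algOf _)) _ hy

lemma latOf_algOf_ordinalSum_subset :
    latOf (algOf (ordinalSum L₁ L₂)) ⊆ ordinalSum (latOf (algOf L₁)) (latOf (algOf L₂)) := by
  intro N hN
  have hprod := eq_prod_comap_of_mem_latOf_algOf_ordinalSum hN
  rcases eq_or_ne (N.comap (LinearMap.inr ℂ X₁ X₂)) ⊥ with hbot | hne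
  · exact Or.inl ⟨_, comap_inl_mem_latOf_algOf hN, hprod.trans (by rw [hbot])⟩
  · exact Or.inr ⟨_, comap_inr_mem_latOf_algOf hN,
      hprod.trans (by rw [comap_inl_eq_top_of_comap_inr_ne_bot hN hne])⟩

lemma prod_bot_mem_latOf_algOf_ordinalSum (h : ⊤ ∈ L₁) {M₁ : Submodule ℂ X₁}
    (hM₁ : M₁ ∈ latOf (algOf L₁)) : M₁.prod ⊥ ∈ latOf (algOf (ordinalSum L₁ L₂)) := by
  refine ⟨?_, fun T hT => ?_⟩
  · rw [Submodule.prod_coe, Submodule.bot_coe]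
    exact hM₁.1.prod isClosed_singleton
  obtain ⟨A, hA, C, B, -, rfl⟩ := (mem_algOf_ordinalSum_iff h).1 hT
  rintro ⟨x, y⟩ ⟨hx, rfl : y = 0⟩
  simpa using hM₁.2 A hA x hx

lemma top_prod_mem_latOf_algOf_ordinalSum (h : ⊤ ∈ L₁) {M₂ : Submodule ℂ X₂}
    (hM₂ : M₂ ∈ latOf (algOf L₂)) :
    (⊤ : Submodule ℂ X₁).prod M₂ ∈ latOf (algOf (ordinalSum L₁ L₂)) := by
  refine ⟨?_, fun T hT => ?_⟩
  · rw [Submodule.prod_coe, Submodule.top_coe]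
    exact isClosed_univ.prod hM₂.1
  obtain ⟨A, -, C, B, hB, rfl⟩ := (mem_algOf_ordinalSum_iff h).1 hT
  rintro ⟨x, y⟩ ⟨-, hy⟩
  exact ⟨trivial, hM₂.2 B hB y hy⟩

lemma latOf_algOf_ordinalSum (h : ⊤ ∈ L₁) :
    latOf (algOf (ordinalSum L₁ L₂)) = ordinalSum (latOf (algOf L₁)) (latOf (algOf L₂)) := by
  refine latOf_algOf_ordinalSum_subset.antisymm ?_
  rintro _ (⟨M₁, hM₁, rfl⟩ | ⟨M₂, hM₂, rfl⟩)
  exacts [prod_bot_mem_latOf_algOf_ordinalSum h hM₁, top_prod_mem_latOf_algOf_ordinalSum h hM₂]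

end OrdinalSum

theorem ordinalSum_reflexive_iff_general
    {X₁ X₂ : Type*} [NormedAddCommGroup X₁] [NormedSpace ℂ X₁]
    [NormedAddCommGroup X₂] [NormedSpace ℂ X₂]
    (L₁ : Set (Submodule ℂ X₁)) (hL₁ : IsSubspaceLattice L₁)
    (L₂ : Set (Submodule ℂ X₂)) (hL₂ : IsSubspaceLattice L₂) :
    latOf (algOf (ordinalSum L₁ L₂)) = ordinalSum L₁ L₂ ↔
      (latOf (algOf L₁) = L₁ ∧ latOf (algOf L₂) = L₂) := by
  obtain ⟨-, -, htop₁, -⟩ := hL₁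
  obtain ⟨-, hbot₂, -, -⟩ := hL₂
  rw [latOf_algOf_ordinalSum htop₁,
    ordinalSum_inj (top_mem_latOf _) htop₁ (bot_mem_latOf _) hbot₂]

/-- The ordinal sum of two subspace lattices is reflexive iff both summands are reflexive. -/
theorem ordinalSum_reflexive_iff
    {X₁ X₂ : Type*} [NormedAddCommGroup X₁] [NormedSpace ℂ X₁] [CompleteSpace X₁]
    [NormedAddCommGroup X₂] [NormedSpace ℂ X₂] [CompleteSpace X₂]
    (L₁ : Set (Submodule ℂ X₁)) (hL₁ : IsSubspaceLattice L₁)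
    (L₂ : Set (Submodule ℂ X₂)) (hL₂ : IsSubspaceLattice L₂) :
    latOf (algOf (ordinalSum L₁ L₂)) = ordinalSum L₁ L₂ ↔
      (latOf (algOf L₁) = L₁ ∧ latOf (algOf L₂) = L₂) :=
  ordinalSum_reflexive_iff_general L₁ hL₁ L₂ hL₂
end
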